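/- For the integrated Ornstein–Uhlenbeck process, ρ̂(t) = γ(ρ(t)) satisfies ρ̂(t) ~ const·t as t → ∞ (more precisely there exist c₁, c₂ > 0 with c₁ t ≤ ρ̂(t) ≤ c₂ t for large t); consequently the mean one-sided first-passage time E[τ_a(x,0)] is infinite, while E[(τ_a(x,0))^{1/4}] is finite. -/

import Mathlib

/-!
Substituting `u = e^{μs}`, so that `1 + 2μρ(s)/σ² = u²`, turns `ρ̂ = γ ∘ ρ` into
`σ²/μ² (s - 2(1 - e^{-μs})/μ + (1 - e^{-2μs})/(2μ))`, the variance of the integrated OU process.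
It is increasing, vanishes at `0` and lies between `σ²s/μ² - 3σ²/(2μ³)` and `σ²s/μ²`, so `ρ̂⁻¹(t)`
is comparable to `t`. As the hitting-time density decays like `t^{-3/2}`, the first moment of
`ρ̂⁻¹(T)` diverges while its moments of order `p < 1/2` are finite.
-/

open Real MeasureTheory Set

noncomputable def integratedOUVariance (μ σ s : ℝ) : ℝ :=
  σ ^ 2 / μ ^ 2 * s - 2 * σ ^ 2 / μ ^ 3 * (1 - exp (-(μ * s)))
    + σ ^ 2 / (2 * μ ^ 3) * (1 - exp (-(2 * μ * s)))

lemma exp_neg_two_mul_mul (μ s : ℝ) : exp (-(2 * μ * s)) = exp (-(μ * s)) ^ 2 := by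
  rw [sq, ← exp_add]; ring_nf

section IntegratedOUVariance

variable {μ σ : ℝ}

lemma integratedOUVariance_eq (μ σ s : ℝ) :
    integratedOUVariance μ σ s = σ ^ 2 / μ ^ 2 * s
      - σ ^ 2 / (2 * μ ^ 3) * ((1 - exp (-(μ * s))) * (3 - exp (-(μ * s)))) := by
  rw [integratedOUVariance, exp_neg_two_mul_mul]; ring

lemma integratedOUVariance_zero : integratedOUVariance μ σ 0 = 0 := by
  simp [integratedOUVariance]

lemma hasDerivAt_integratedOUVariance (hμ : μ ≠ 0) (s : ℝ) :
    HasDerivAt (integratedOUVariance μ σ) (σ ^ 2 / μ ^ 2 * (1 - exp (-(μ * s))) ^ 2) s := by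
  have hv : HasDerivAt (fun s => exp (-(μ * s))) (exp (-(μ * s)) * -μ) s := by
    simpa using ((hasDerivAt_id s).const_mul μ).neg.exp
  rw [funext (integratedOUVariance_eq μ σ)]
  refine (((hasDerivAt_id' s).const_mul _).fun_sub
    (((hv.const_sub 1).fun_mul (hv.const_sub 3)).const_mul _)).congr_deriv ?_
  field_simp
  ring

lemma monotone_integratedOUVariance (hμ : μ ≠ 0) : Monotone (integratedOUVariance μ σ) :=
  monotone_of_deriv_nonneg (fun s => (hasDerivAt_integratedOUVariance hμ s).differentiableAt)
    fun s => (hasDerivAt_integratedOUVariance hμ s).deriv ▸ by positivity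

lemma integratedOUVariance_le (hμ : 0 < μ) {s : ℝ} (hs : 0 ≤ s) :
    integratedOUVariance μ σ s ≤ σ ^ 2 / μ ^ 2 * s := by
  have hv : exp (-(μ * s)) ≤ 1 := exp_le_one_iff.2 (by nlinarith)
  rw [integratedOUVariance_eq]
  exact sub_le_self _ (mul_nonneg (by positivity) (mul_nonneg (by linarith) (by linarith)))

lemma sub_le_integratedOUVariance (hμ : 0 < μ) {s : ℝ} (hs : 0 ≤ s) :
    σ ^ 2 / μ ^ 2 * s - 3 * σ ^ 2 / (2 * μ ^ 3) ≤ integratedOUVariance μ σ s := by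
  have hv : exp (-(μ * s)) ≤ 1 := exp_le_one_iff.2 (by nlinarith)
  have hprod : (1 - exp (-(μ * s))) * (3 - exp (-(μ * s))) ≤ 3 := by
    nlinarith [exp_pos (-(μ * s))]
  rw [integratedOUVariance_eq, mul_div_assoc, mul_comm 3]
  exact sub_le_sub_left (mul_le_mul_of_nonneg_left hprod (by positivity)) _

lemma half_mul_le_integratedOUVariance (hμ : 0 < μ) {t : ℝ} (ht : 3 / μ ≤ t) :
    σ ^ 2 / (2 * μ ^ 2) * t ≤ integratedOUVariance μ σ t := by
  have hlower := sub_le_integratedOUVariance (σ := σ) hμ ((div_pos three_pos hμ).le.trans ht)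
  have hconst : 3 * σ ^ 2 / (2 * μ ^ 3) ≤ σ ^ 2 / (2 * μ ^ 2) * t :=
    calc 3 * σ ^ 2 / (2 * μ ^ 3) = σ ^ 2 / (2 * μ ^ 2) * (3 / μ) := by field_simp
      _ ≤ σ ^ 2 / (2 * μ ^ 2) * t := mul_le_mul_of_nonneg_left ht (by positivity)
  have hhalf : σ ^ 2 / μ ^ 2 * t = 2 * (σ ^ 2 / (2 * μ ^ 2) * t) := by field_simp
  linarith

lemma gamma_comp_rho_eq_integratedOUVariance (hμ : μ ≠ 0) (hσ : σ ≠ 0) {γ ρ : ℝ → ℝ}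
    (hγ : ∀ t, γ t = σ ^ 2 * t / (μ ^ 2 * (σ ^ 2 + 2 * μ * t))
      - 2 * σ ^ 2 / (μ ^ 3 * sqrt (1 + 2 * μ * t / σ ^ 2)) * (sqrt (1 + 2 * μ * t / σ ^ 2) - 1)
      + σ ^ 2 / (2 * μ ^ 3) * log (1 + 2 * μ * t / σ ^ 2))
    (hρ : ∀ t, ρ t = σ ^ 2 / (2 * μ) * (exp (2 * μ * t) - 1)) (s : ℝ) :
    γ (ρ s) = integratedOUVariance μ σ s := by
  have hu : exp (2 * μ * s) = exp (μ * s) ^ 2 := by rw [sq, ← exp_add]; ring_nf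
  have hsum : σ ^ 2 + 2 * μ * ρ s = σ ^ 2 * exp (μ * s) ^ 2 := by
    rw [hρ, ← hu]; field_simp; ring
  have hratio : 1 + 2 * μ * ρ s / σ ^ 2 = exp (μ * s) ^ 2 := by
    field_simp
    linarith
  rw [hγ, hratio, sqrt_sq (exp_pos _).le, log_pow, log_exp, hsum, hρ, hu, integratedOUVariance,
    exp_neg_two_mul_mul, exp_neg]
  have := (exp_pos (μ * s)).ne'
  field_simp
  ring

end IntegratedOUVariance

lemma Monotone.monotoneOn_of_rightInvOn {α β : Type*} [LinearOrder α] [PartialOrder β]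
    {f : α → β} {g : β → α} {s : Set β} (hf : Monotone f) (hg : RightInvOn g f s) :
    MonotoneOn g s := by
  intro a ha b hb hab
  by_contra hlt
  have hba : b ≤ a := by simpa only [hg ha, hg hb] using hf (not_le.1 hlt).le
  exact hlt (le_antisymm hab hba ▸ le_rfl)

section RightInverse

variable {μ σ : ℝ} {g : ℝ → ℝ}

lemma pos_of_rightInvOn_integratedOUVariance (hμ : μ ≠ 0)
    (hg : RightInvOn g (integratedOUVariance μ σ) (Ioi 0)) {t : ℝ} (ht : 0 < t) : 0 < g t :=
  (monotone_integratedOUVariance hμ).reflect_lt (by rwa [integratedOUVariance_zero, hg ht])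

lemma mul_le_of_rightInvOn_integratedOUVariance (hμ : 0 < μ) (hσ : σ ≠ 0)
    (hg : RightInvOn g (integratedOUVariance μ σ) (Ioi 0)) {t : ℝ} (ht : 0 < t) :
    μ ^ 2 / σ ^ 2 * t ≤ g t := by
  have h := integratedOUVariance_le (σ := σ) hμ
    (pos_of_rightInvOn_integratedOUVariance hμ.ne' hg ht).le
  rw [hg ht] at h
  calc μ ^ 2 / σ ^ 2 * t ≤ μ ^ 2 / σ ^ 2 * (σ ^ 2 / μ ^ 2 * g t) :=
        mul_le_mul_of_nonneg_left h (by positivity)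
    _ = g t := by field_simp

lemma le_of_rightInvOn_integratedOUVariance (hμ : 0 < μ) (hσ : σ ≠ 0)
    (hg : RightInvOn g (integratedOUVariance μ σ) (Ioi 0)) {t : ℝ} (ht : 0 < t) :
    g t ≤ μ ^ 2 / σ ^ 2 * (t + 3 * σ ^ 2 / (2 * μ ^ 3)) := by
  have h := sub_le_integratedOUVariance (σ := σ) hμ
    (pos_of_rightInvOn_integratedOUVariance hμ.ne' hg ht).le
  rw [hg ht] at h
  calc g t = μ ^ 2 / σ ^ 2 * (σ ^ 2 / μ ^ 2 * g t - 3 * σ ^ 2 / (2 * μ ^ 3)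
        + 3 * σ ^ 2 / (2 * μ ^ 3)) := by field_simp; ring
    _ ≤ μ ^ 2 / σ ^ 2 * (t + 3 * σ ^ 2 / (2 * μ ^ 3)) := by gcongr

end RightInverse

noncomputable def hittingTimeDensity (k t : ℝ) : ℝ :=
  k / (sqrt (2 * π) * t ^ ((3 : ℝ) / 2)) * exp (-k ^ 2 / (2 * t))

section HittingTimeDensity

variable {k t : ℝ}

lemma measurable_hittingTimeDensity (k : ℝ) : Measurable (hittingTimeDensity k) := by
  unfold hittingTimeDensity
  fun_prop

lemma hittingTimeDensity_nonneg (hk : 0 ≤ k) (ht : 0 ≤ t) : 0 ≤ hittingTimeDensity k t := by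
  unfold hittingTimeDensity
  positivity

lemma hittingTimeDensity_le (hk : 0 ≤ k) (ht : 0 < t) :
    hittingTimeDensity k t ≤ k / sqrt (2 * π) * t ^ (-(3 / 2 : ℝ)) := by
  have hexp : exp (-k ^ 2 / (2 * t)) ≤ 1 := exp_le_one_iff.2 (by rw [neg_div]; simp; positivity)
  rw [hittingTimeDensity, rpow_neg ht.le, ← div_eq_mul_inv, div_div]
  exact mul_le_of_le_one_right (by positivity) hexp

lemma le_hittingTimeDensity (hk : 0 ≤ k) (ht : 1 ≤ t) :
    k / sqrt (2 * π) * exp (-k ^ 2 / 2) * t ^ (-(3 / 2 : ℝ)) ≤ hittingTimeDensity k t := by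
  have hexp : exp (-k ^ 2 / 2) ≤ exp (-k ^ 2 / (2 * t)) := by
    rw [exp_le_exp, neg_div, neg_div, neg_le_neg_iff]
    exact div_le_div_of_nonneg_left (sq_nonneg k) two_pos (by linarith)
  rw [hittingTimeDensity, rpow_neg (by linarith), mul_right_comm, ← div_eq_mul_inv, div_div]
  gcongr

lemma hittingTimeDensity_le_of_le_one (hk : 0 < k) (ht : 0 < t) (ht1 : t ≤ 1) :
    hittingTimeDensity k t ≤ 8 / (sqrt (2 * π) * k ^ 3) := by
  have hexp : exp (-k ^ 2 / (2 * t)) ≤ 8 * t ^ 2 / k ^ 4 := by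
    have h := pow_div_factorial_le_exp (x := k ^ 2 / (2 * t)) (by positivity) 2
    rw [neg_div, exp_neg]
    calc (exp (k ^ 2 / (2 * t)))⁻¹ ≤ ((k ^ 2 / (2 * t)) ^ 2 / (2 : ℕ).factorial)⁻¹ :=
          inv_anti₀ (by positivity) h
      _ = 8 * t ^ 2 / k ^ 4 := by simp [Nat.factorial]; field_simp; norm_num
  have hpow : t ^ 2 ≤ t ^ ((3 : ℝ) / 2) := by
    simpa using rpow_le_rpow_of_exponent_ge ht ht1 (by norm_num : (3 : ℝ) / 2 ≤ 2)
  calc hittingTimeDensity k t ≤ k / (sqrt (2 * π) * t ^ 2) * (8 * t ^ 2 / k ^ 4) := by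
        unfold hittingTimeDensity
        gcongr
    _ = 8 / (sqrt (2 * π) * k ^ 3) := by field_simp

end HittingTimeDensity

lemma lintegral_Ioi_one_ofReal_rpow_eq_top {s : ℝ} (hs : -1 ≤ s) :
    ∫⁻ t in Ioi 1, ENNReal.ofReal (t ^ s) = ⊤ := by
  by_contra h
  have hnonneg : 0 ≤ᵐ[volume.restrict (Ioi 1)] fun t : ℝ => t ^ s := by
    filter_upwards [ae_restrict_mem measurableSet_Ioi] with t ht
    exact rpow_nonneg (zero_le_one.trans (le_of_lt ht)) s
  have hint := (lintegral_ofReal_ne_top_iff_integrable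
    (measurable_id.pow_const s).aestronglyMeasurable hnonneg).1 h
  exact hs.not_gt ((integrableOn_Ioi_rpow_iff one_pos).1 hint)

lemma lintegral_mul_hittingTimeDensity_eq_top {k c : ℝ} {g : ℝ → ℝ} (hk : 0 < k) (hc : 0 < c)
    (hg : ∀ t, 1 < t → c * t ≤ g t) :
    ∫⁻ t in Ioi 0, ENNReal.ofReal (g t * hittingTimeDensity k t) = ⊤ := by
  set C := c * (k / sqrt (2 * π) * exp (-k ^ 2 / 2))
  have hC : 0 < C := by positivity
  have hpointwise : ∀ t ∈ Ioi (1 : ℝ), C * t ^ (-(1 / 2 : ℝ)) ≤ g t * hittingTimeDensity k t := by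
    intro t ht
    have ht0 : 0 < t := one_pos.trans ht
    calc C * t ^ (-(1 / 2 : ℝ))
        = c * t * (k / sqrt (2 * π) * exp (-k ^ 2 / 2) * t ^ (-(3 / 2 : ℝ))) := by
          rw [show -(1 / 2 : ℝ) = 1 + -(3 / 2) by norm_num, rpow_add ht0, rpow_one]; ring
      _ ≤ g t * hittingTimeDensity k t :=
          mul_le_mul (hg t ht) (le_hittingTimeDensity hk.le ht.le) (by positivity)
            ((by positivity : 0 ≤ c * t).trans (hg t ht))
  refine top_unique ?_
  calc ⊤ = ENNReal.ofReal C * ∫⁻ t in Ioi 1, ENNReal.ofReal (t ^ (-(1 / 2 : ℝ))) := by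
        rw [lintegral_Ioi_one_ofReal_rpow_eq_top (by norm_num), ENNReal.mul_top (by simpa)]
    _ = ∫⁻ t in Ioi 1, ENNReal.ofReal (C * t ^ (-(1 / 2 : ℝ))) := by
        rw [← lintegral_const_mul' _ _ ENNReal.ofReal_ne_top]
        congr with t
        rw [ENNReal.ofReal_mul hC.le]
    _ ≤ ∫⁻ t in Ioi 1, ENNReal.ofReal (g t * hittingTimeDensity k t) :=
        setLIntegral_mono' measurableSet_Ioi fun t ht => ENNReal.ofReal_le_ofReal (hpointwise t ht)
    _ ≤ ∫⁻ t in Ioi 0, ENNReal.ofReal (g t * hittingTimeDensity k t) :=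
        lintegral_mono_set (Ioi_subset_Ioi zero_le_one)

lemma integrableOn_rpow_mul_hittingTimeDensity {k p C D : ℝ} {g : ℝ → ℝ} (hk : 0 < k)
    (hp0 : 0 ≤ p) (hp : p < 1 / 2) (hgm : AEMeasurable g (volume.restrict (Ioi 0)))
    (hg0 : ∀ t, 0 < t → 0 ≤ g t) (hC : 0 ≤ C) (hD : 0 ≤ D) (hg : ∀ t, 0 < t → g t ≤ C * (t + D)) :
    IntegrableOn (fun t => g t ^ p * hittingTimeDensity k t) (Ioi 0) := by
  set M := (C * (1 + D)) ^ p
  have hM : 0 ≤ M := by positivity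
  have hgp : ∀ t, 0 < t → g t ^ p ≤ M * max 1 t ^ p := by
    intro t ht
    have hlin : C * (t + D) ≤ C * (1 + D) * max 1 t := by
      nlinarith [le_max_left 1 t, le_max_right 1 t, mul_nonneg hC hD]
    calc g t ^ p ≤ (C * (1 + D) * max 1 t) ^ p := rpow_le_rpow (hg0 t ht) ((hg t ht).trans hlin) hp0
      _ = M * max 1 t ^ p := mul_rpow (by positivity) (by positivity)
  have hfm : AEStronglyMeasurable (fun t => g t ^ p * hittingTimeDensity k t)
      (volume.restrict (Ioi 0)) :=
    ((hgm.pow_const p).mul (measurable_hittingTimeDensity k).aemeasurable).aestronglyMeasurable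
  have hnonneg : ∀ t, 0 < t → 0 ≤ g t ^ p * hittingTimeDensity k t := fun t ht =>
    mul_nonneg (rpow_nonneg (hg0 t ht) p) (hittingTimeDensity_nonneg hk.le ht.le)
  rw [← Ioc_union_Ioi_eq_Ioi zero_le_one]
  refine IntegrableOn.union ?_ ?_
  · refine Integrable.mono'
      (integrableOn_const (C := M * (8 / (sqrt (2 * π) * k ^ 3))) measure_Ioc_lt_top.ne)
      (hfm.mono_measure (Measure.restrict_mono Ioc_subset_Ioi_self le_rfl)) ?_
    filter_upwards [ae_restrict_mem measurableSet_Ioc] with t ⟨ht0, ht1⟩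
    rw [norm_of_nonneg (hnonneg t ht0)]
    refine mul_le_mul ?_ (hittingTimeDensity_le_of_le_one hk ht0 ht1)
      (hittingTimeDensity_nonneg hk.le ht0.le) hM
    simpa [max_eq_left ht1] using hgp t ht0
  · refine Integrable.mono'
      ((integrableOn_Ioi_rpow_of_lt (a := p - 3 / 2) (by linarith) one_pos).const_mul
        (M * (k / sqrt (2 * π))))
      (hfm.mono_measure (Measure.restrict_mono (Ioi_subset_Ioi zero_le_one) le_rfl)) ?_
    filter_upwards [ae_restrict_mem measurableSet_Ioi] with t (ht : 1 < t)
    have ht0 : 0 < t := one_pos.trans ht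
    rw [norm_of_nonneg (hnonneg t ht0)]
    calc g t ^ p * hittingTimeDensity k t
        ≤ M * t ^ p * (k / sqrt (2 * π) * t ^ (-(3 / 2 : ℝ))) :=
          mul_le_mul (by simpa [max_eq_right ht.le] using hgp t ht0)
            (hittingTimeDensity_le hk.le ht0) (hittingTimeDensity_nonneg hk.le ht0.le)
            (by positivity)
      _ = M * (k / sqrt (2 * π)) * t ^ (p - 3 / 2) := by
          rw [sub_eq_add_neg, rpow_add ht0]; ring

/-- For the integrated OU process, `ρ̂ = γ ∘ ρ` grows linearly
(`c₁ t ≤ ρ̂ t ≤ c₂ t` for large `t`); consequently the mean one-sided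
first-passage time `E[τ_a(x,0)] = E[ρ̂⁻¹(T)]` (computed against the Brownian
hitting-time density at level `a − x > 0`) is infinite, while
`E[(τ_a(x,0))^{1/4}]` is finite. -/
theorem integratedOU_FPT_moments (μ σ x a : ℝ) (hμ : 0 < μ) (hσ : 0 < σ)
    (hxa : x < a)
    (γ ρ ρh ρinv : ℝ → ℝ)
    (hγ : ∀ t, γ t = σ ^ 2 * t / (μ ^ 2 * (σ ^ 2 + 2 * μ * t))
      - 2 * σ ^ 2 / (μ ^ 3 * Real.sqrt (1 + 2 * μ * t / σ ^ 2)) *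
          (Real.sqrt (1 + 2 * μ * t / σ ^ 2) - 1)
      + σ ^ 2 / (2 * μ ^ 3) * Real.log (1 + 2 * μ * t / σ ^ 2))
    (hρ : ∀ t, ρ t = σ ^ 2 / (2 * μ) * (Real.exp (2 * μ * t) - 1))
    (hρh : ∀ t, ρh t = γ (ρ t))
    (hρinv : ∀ t, 0 < t → ρinv (ρh t) = t ∧ ρh (ρinv t) = t) :
    (∃ c₁ c₂ t₀ : ℝ, 0 < c₁ ∧ 0 < c₂ ∧
      ∀ t, t₀ ≤ t → c₁ * t ≤ ρh t ∧ ρh t ≤ c₂ * t) ∧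
    (∫⁻ t in Set.Ioi (0:ℝ),
        ENNReal.ofReal (ρinv t *
          ((a - x) / (Real.sqrt (2 * π) * t ^ ((3:ℝ)/2)) *
            Real.exp (-(a - x) ^ 2 / (2 * t)))) = ⊤) ∧
    IntegrableOn
      (fun t => (ρinv t) ^ ((1:ℝ)/4) *
        ((a - x) / (Real.sqrt (2 * π) * t ^ ((3:ℝ)/2)) *
          Real.exp (-(a - x) ^ 2 / (2 * t))))
      (Set.Ioi 0) := by
  have hρh_eq : ρh = integratedOUVariance μ σ :=
    funext fun s => (hρh s).trans (gamma_comp_rho_eq_integratedOUVariance hμ.ne' hσ.ne' hγ hρ s)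
  have hinv : RightInvOn ρinv (integratedOUVariance μ σ) (Ioi 0) :=
    fun t ht => hρh_eq ▸ (hρinv t ht).2
  have hk : 0 < a - x := sub_pos.2 hxa
  refine ⟨⟨σ ^ 2 / (2 * μ ^ 2), σ ^ 2 / μ ^ 2, 3 / μ, by positivity, by positivity,
    fun t ht => hρh_eq ▸ ⟨half_mul_le_integratedOUVariance hμ ht,
      integratedOUVariance_le hμ ((div_pos three_pos hμ).le.trans ht)⟩⟩, ?_, ?_⟩
  · exact lintegral_mul_hittingTimeDensity_eq_top hk (by positivity) fun t ht =>
      mul_le_of_rightInvOn_integratedOUVariance hμ hσ.ne' hinv (one_pos.trans ht)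
  · exact integrableOn_rpow_mul_hittingTimeDensity hk (by norm_num) (by norm_num)
      (aemeasurable_restrict_of_monotoneOn measurableSet_Ioi
        ((monotone_integratedOUVariance hμ.ne').monotoneOn_of_rightInvOn hinv))
      (fun t ht => (pos_of_rightInvOn_integratedOUVariance hμ.ne' hinv ht).le)
      (by positivity) (by positivity)
      (fun t ht => le_of_rightInvOn_integratedOUVariance hμ hσ.ne' hinv ht)
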